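/- Let f(ρ) = Σ_{i=0}^n c_i ρ^i be a real polynomial with nonnegative coefficients c_i ≥ 0, and define the activation σ(z) = Σ_{i=0}^n √(c_i) · He_i(z)/√(i!), where He_i is the i-th probabilists' Hermite polynomial. Then for all unit vectors u, v ∈ ℝ^d, ∫_{ℝ^d} σ(⟨u, x⟩) σ(⟨v, x⟩) dμ_d(x) = f(⟨u, v⟩). That is, every polynomial with nonnegative Taylor coefficients is a realizable rotationally invariant potential on the unit sphere under standard Gaussian inputs. -/

import Mathlib

/-
Gaussian integration by parts, E[x_k P(x)] = E[∂_k P(x)] for polynomials P, reduces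
coordinatewise to the moment recursion E[x^(k+1)] = k E[x^(k-1)] of the one-dimensional
Gaussian. Applied to P = He_m(⟨u,x⟩) He_n(⟨w,x⟩), together with He_m' = m He_(m-1) and the
three-term recurrence He_(m+1)(z) = z He_m(z) - m He_(m-1)(z), it gives for a unit vector u
  E[He_(m+1)(⟨u,x⟩) He_n(⟨w,x⟩)] = n ⟨u,w⟩ E[He_m(⟨u,x⟩) He_(n-1)(⟨w,x⟩)],
hence E[He_m(⟨u,x⟩) He_n(⟨w,x⟩)] = δ_mn m! ⟨u,w⟩^m for unit u, w. Expanding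
σ(⟨u,x⟩) σ(⟨v,x⟩), only the diagonal terms survive, and the i-th one is
(√c_i / √i!)² i! ⟨u,v⟩^i = c_i ⟨u,v⟩^i.
-/

open MeasureTheory ProbabilityTheory RealInnerProductSpace Finset

/-- The standard Gaussian measure `N(0, I_d)` on `ℝ^d`. -/
noncomputable def stdGaussian (d : ℕ) : Measure (EuclideanSpace ℝ (Fin d)) :=
  (Measure.pi fun _ : Fin d => gaussianReal 0 1).map (WithLp.toLp 2)

/-- The `i`-th probabilists' Hermite polynomial evaluated at `z : ℝ`. -/
noncomputable def He (i : ℕ) (z : ℝ) : ℝ := Polynomial.aeval z (Polynomial.hermite i)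

open MvPolynomial
open scoped NNReal Nat

namespace Polynomial

theorem derivative_hermite (n : ℕ) : derivative (hermite n) = (n : ℤ[X]) * hermite (n - 1) := by
  induction n with
  | zero => simp
  | succ n ih =>
    cases n with
    | zero => simp
    | succ n =>
      simp only [Nat.add_sub_cancel] at ih ⊢
      rw [hermite_succ (n + 1), derivative_sub, derivative_mul, derivative_X, one_mul, ih,
        derivative_mul, derivative_natCast, zero_mul, zero_add, hermite_succ n]
      push_cast
      ring

theorem hermite_succ' (n : ℕ) :
    hermite (n + 1) = X * hermite n - (n : ℤ[X]) * hermite (n - 1) := by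
  rw [hermite_succ, derivative_hermite]

end Polynomial

lemma integrable_pow_gaussianReal (μ : ℝ) (v : ℝ≥0) (n : ℕ) :
    Integrable (fun x : ℝ => x ^ n) (gaussianReal μ v) :=
  integrable_pow_of_integrable_exp_mul (X := id) one_ne_zero
    (integrable_exp_mul_gaussianReal 1) (integrable_exp_mul_gaussianReal (-1)) n

lemma integrable_gaussianPDFReal_mul_pow (μ : ℝ) {v : ℝ≥0} (hv : v ≠ 0) (n : ℕ) :
    Integrable (fun x : ℝ => gaussianPDFReal μ v x * x ^ n) := by
  have := integrable_pow_gaussianReal μ v n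
  rw [gaussianReal_of_var_ne_zero μ hv, integrable_withDensity_iff_integrable_smul'
    (measurable_gaussianPDF μ v) (ae_of_all _ fun _ => gaussianPDF_lt_top)] at this
  simpa [toReal_gaussianPDF] using this

lemma hasDerivAt_gaussianPDFReal (μ : ℝ) (v : ℝ≥0) (x : ℝ) :
    HasDerivAt (gaussianPDFReal μ v) (-((x - μ) / v) * gaussianPDFReal μ v x) x := by
  have h : HasDerivAt (fun y : ℝ => -(y - μ) ^ 2 / (2 * v)) (-((x - μ) / v)) x :=
    (((hasDerivAt_id x).sub_const μ).pow 2 |>.neg.div_const (2 * (v : ℝ))).congr_deriv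
      (by simp; ring)
  rw [gaussianPDFReal_def]
  exact (h.exp.const_mul _).congr_deriv (by ring)

lemma integral_pow_succ_gaussianReal (v : ℝ≥0) (k : ℕ) :
    ∫ x, x ^ (k + 1) ∂gaussianReal 0 v = v * k * ∫ x, x ^ (k - 1) ∂gaussianReal 0 v := by
  rcases eq_or_ne v 0 with rfl | hv
  · simp
  have hint := integrable_gaussianPDFReal_mul_pow 0 hv
  simp only [integral_gaussianReal_eq_integral_smul hv, smul_eq_mul]
  have ibp := integral_mul_deriv_eq_deriv_mul_of_integrable (u := fun x : ℝ => x ^ k)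
    (u' := fun x => k * x ^ (k - 1)) (v := gaussianPDFReal 0 v)
    (v' := fun x => -(x / v) * gaussianPDFReal 0 v x)
    (fun x _ => hasDerivAt_pow k x) (fun x _ => by simpa using hasDerivAt_gaussianPDFReal 0 v x)
    (((hint (k + 1)).const_mul (-(v : ℝ)⁻¹)).congr (ae_of_all _ fun x => by
      simp only [Pi.mul_apply]; ring))
    (((hint (k - 1)).const_mul (k : ℝ)).congr (ae_of_all _ fun x => by
      simp only [Pi.mul_apply]; ring))
    ((hint k).congr (ae_of_all _ fun x => by simp only [Pi.mul_apply]; ring))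
  calc ∫ x, gaussianPDFReal 0 v x * x ^ (k + 1)
      = -v * ∫ x, x ^ k * (-(x / v) * gaussianPDFReal 0 v x) := by
        rw [← integral_const_mul]; congr 1; ext x; field_simp; ring
    _ = v * k * ∫ x, gaussianPDFReal 0 v x * x ^ (k - 1) := by
        rw [ibp, neg_mul_neg, ← integral_const_mul, ← integral_const_mul]
        congr 1; ext x; ring

section

variable {ι : Type*} [Fintype ι] (v : ℝ≥0)

noncomputable abbrev gaussianPi (ι : Type*) [Fintype ι] (v : ℝ≥0) : Measure (ι → ℝ) :=
  Measure.pi fun _ : ι => gaussianReal 0 v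

lemma eval_monomial_eq_prod {R : Type*} [CommSemiring R] (s : ι →₀ ℕ) (a : R) (x : ι → R) :
    eval x (monomial s a) = a * ∏ i, x i ^ s i := by
  rw [eval_monomial, Finsupp.prod_pow]

lemma integrable_eval_gaussianPi (P : MvPolynomial ι ℝ) :
    Integrable (fun x => eval x P) (gaussianPi ι v) := by
  induction P using MvPolynomial.induction_on' with
  | monomial s a =>
    simp_rw [eval_monomial_eq_prod]
    exact (Integrable.fintype_prod fun i => integrable_pow_gaussianReal 0 v (s i)).const_mul a
  | add p q hp hq => simp_rw [eval_add]; exact hp.add hq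

lemma integral_eval_monomial_gaussianPi (s : ι →₀ ℕ) (a : ℝ) :
    ∫ x, eval x (monomial s a) ∂gaussianPi ι v
      = a * ∏ i, ∫ y, y ^ s i ∂gaussianReal 0 v := by
  simp_rw [eval_monomial_eq_prod]
  rw [integral_const_mul, integral_fintype_prod_eq_prod (fun i y => y ^ s i)]

noncomputable def gaussianPiExpectation (ι : Type*) [Fintype ι] (v : ℝ≥0) :
    MvPolynomial ι ℝ →ₗ[ℝ] ℝ where
  toFun P := ∫ x, eval x P ∂gaussianPi ι v
  map_add' P Q := by
    simp_rw [eval_add]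
    exact integral_add (integrable_eval_gaussianPi v P) (integrable_eval_gaussianPi v Q)
  map_smul' a P := by
    simp_rw [smul_eval, RingHom.id_apply]
    exact integral_const_mul a _

lemma gaussianPiExpectation_apply (P : MvPolynomial ι ℝ) :
    gaussianPiExpectation ι v P = ∫ x, eval x P ∂gaussianPi ι v := rfl

lemma gaussianPiExpectation_one : gaussianPiExpectation ι v 1 = 1 := by
  simp [gaussianPiExpectation_apply]

lemma gaussianPiExpectation_X_mul [DecidableEq ι] (k : ι) (P : MvPolynomial ι ℝ) :
    gaussianPiExpectation ι v (X k * P) = v * gaussianPiExpectation ι v (pderiv k P) := by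
  induction P using MvPolynomial.induction_on' with
  | monomial s a =>
    have hX : X k * monomial s a = monomial (s + Finsupp.single k 1) a := by
      rw [add_comm, monomial_single_add, pow_one]
    have hmom : ∀ j, ∫ y, y ^ (s + Finsupp.single k 1 : ι →₀ ℕ) j ∂gaussianReal 0 v
        = (if j = k then (v : ℝ) * s k else 1)
          * ∫ y, y ^ (s - Finsupp.single k 1 : ι →₀ ℕ) j ∂gaussianReal 0 v := by
      intro j
      rcases eq_or_ne j k with rfl | hjk
      · simpa using integral_pow_succ_gaussianReal v (s j)
      · simp [hjk]
    rw [hX, pderiv_monomial, gaussianPiExpectation_apply,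
      gaussianPiExpectation_apply, integral_eval_monomial_gaussianPi,
      integral_eval_monomial_gaussianPi, Finset.prod_congr rfl fun j _ => hmom j,
      Finset.prod_mul_distrib, Finset.prod_ite_eq']
    simp only [Finset.mem_univ, if_true]
    ring
  | add p q hp hq => rw [mul_add, map_add, map_add, map_add, hp, hq, mul_add]

noncomputable def linearForm (w : ι → ℝ) : MvPolynomial ι ℝ := ∑ k, C (w k) * X k

noncomputable def hermiteForm (w : ι → ℝ) (m : ℕ) : MvPolynomial ι ℝ :=
  Polynomial.aeval (linearForm w) (Polynomial.hermite m)

lemma eval_linearForm (w x : ι → ℝ) : eval x (linearForm w) = ∑ k, w k * x k := by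
  simp [linearForm]

lemma eval_hermiteForm (w x : ι → ℝ) (m : ℕ) :
    eval x (hermiteForm w m) = He m (∑ k, w k * x k) := by
  rw [hermiteForm, ← eval_linearForm]
  exact (Polynomial.aeval_algHom_apply (eval x).toIntAlgHom _ _).symm

lemma pderiv_linearForm [DecidableEq ι] (k : ι) (w : ι → ℝ) :
    pderiv k (linearForm w) = C (w k) := by
  simp [linearForm, pderiv_X, Pi.single_apply]

lemma pderiv_hermiteForm [DecidableEq ι] (k : ι) (w : ι → ℝ) (m : ℕ) :
    pderiv k (hermiteForm w m) = (m * w k) • hermiteForm w (m - 1) := by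
  -- `hermite m` has integer coefficients, so the chain rule is applied to `pderiv k` over `ℤ`
  have chain :=
    ((pderiv k : Derivation ℝ (MvPolynomial ι ℝ) _).restrictScalars ℤ).comp_aeval_eq
      (linearForm w) (Polynomial.hermite m)
  rw [Derivation.restrictScalars_apply, Derivation.restrictScalars_apply, smul_eq_mul,
    Polynomial.derivative_hermite, map_mul, map_natCast, pderiv_linearForm] at chain
  rw [hermiteForm, chain, hermiteForm, ← C_mul', map_mul, map_natCast]
  ring

lemma hermiteForm_zero (w : ι → ℝ) : hermiteForm w 0 = 1 := by
  simp [hermiteForm]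

lemma hermiteForm_succ (w : ι → ℝ) (m : ℕ) :
    hermiteForm w (m + 1)
      = linearForm w * hermiteForm w m - (m : ℝ) • hermiteForm w (m - 1) := by
  rw [hermiteForm, hermiteForm, hermiteForm, Polynomial.hermite_succ', map_sub, map_mul, map_mul,
    Polynomial.aeval_X, map_natCast, Nat.cast_smul_eq_nsmul, nsmul_eq_mul]

lemma gaussianPiExpectation_linearForm_mul [DecidableEq ι] (w : ι → ℝ)
    (P : MvPolynomial ι ℝ) :
    gaussianPiExpectation ι v (linearForm w * P)
      = v * ∑ k, w k * gaussianPiExpectation ι v (pderiv k P) := by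
  rw [linearForm, Finset.sum_mul, map_sum, Finset.mul_sum]
  refine Finset.sum_congr rfl fun k _ => ?_
  rw [mul_assoc, C_mul', map_smul, gaussianPiExpectation_X_mul, smul_eq_mul]
  ring

lemma gaussianPiExpectation_hermiteForm_succ_mul [DecidableEq ι] {u : ι → ℝ}
    (hu : ∑ k, u k ^ 2 = 1) (w : ι → ℝ) (m n : ℕ) :
    gaussianPiExpectation ι 1 (hermiteForm u (m + 1) * hermiteForm w n)
      = n * (∑ k, u k * w k)
        * gaussianPiExpectation ι 1 (hermiteForm u m * hermiteForm w (n - 1)) := by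
  have hpderiv : ∀ k, pderiv k (hermiteForm u m * hermiteForm w n)
      = (m * u k) • (hermiteForm u (m - 1) * hermiteForm w n)
        + (n * w k) • (hermiteForm u m * hermiteForm w (n - 1)) := by
    intro k
    rw [pderiv_mul, pderiv_hermiteForm, pderiv_hermiteForm, smul_mul_assoc, mul_smul_comm]
  rw [hermiteForm_succ, sub_mul, map_sub, mul_assoc, gaussianPiExpectation_linearForm_mul]
  simp only [hpderiv, map_add, map_smul, smul_mul_assoc, smul_eq_mul, NNReal.coe_one, one_mul]
  set E₁ := gaussianPiExpectation ι 1 (hermiteForm u (m - 1) * hermiteForm w n)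
  set E₂ := gaussianPiExpectation ι 1 (hermiteForm u m * hermiteForm w (n - 1))
  have hsum : ∑ k, u k * (m * u k * E₁ + n * w k * E₂)
      = m * E₁ * ∑ k, u k ^ 2 + n * E₂ * ∑ k, u k * w k := by
    rw [Finset.mul_sum, Finset.mul_sum, ← Finset.sum_add_distrib]
    exact Finset.sum_congr rfl fun k _ => by ring
  rw [hsum, hu]
  ring

lemma gaussianPiExpectation_hermiteForm_mul [DecidableEq ι] {u w : ι → ℝ}
    (hu : ∑ k, u k ^ 2 = 1) (hw : ∑ k, w k ^ 2 = 1) (m n : ℕ) :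
    gaussianPiExpectation ι 1 (hermiteForm u m * hermiteForm w n)
      = if m = n then m ! * (∑ k, u k * w k) ^ m else 0 := by
  induction m generalizing n with
  | zero =>
    cases n with
    | zero => simp [hermiteForm_zero, gaussianPiExpectation_one]
    | succ n => rw [mul_comm, gaussianPiExpectation_hermiteForm_succ_mul hw]; simp
  | succ m ih =>
    cases n with
    | zero => rw [gaussianPiExpectation_hermiteForm_succ_mul hu]; simp
    | succ n =>
      rw [gaussianPiExpectation_hermiteForm_succ_mul hu, Nat.add_sub_cancel, ih]
      by_cases hmn : m = n
      · subst hmn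
        simp only [if_true, Nat.factorial_succ]
        push_cast
        ring
      · simp [hmn]

theorem integral_hermite_sum_mul_gaussianPi {u w : ι → ℝ}
    (hu : ∑ k, u k ^ 2 = 1) (hw : ∑ k, w k ^ 2 = 1) (a : ℕ → ℝ) (s : Finset ℕ) :
    ∫ x, (∑ i ∈ s, a i * He i (∑ k, u k * x k))
        * (∑ i ∈ s, a i * He i (∑ k, w k * x k)) ∂gaussianPi ι 1
      = ∑ i ∈ s, a i ^ 2 * i ! * (∑ k, u k * w k) ^ i := by
  classical
  have hseries : ∀ (y x : ι → ℝ), ∑ i ∈ s, a i * He i (∑ k, y k * x k)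
      = eval x (∑ i ∈ s, a i • hermiteForm y i) := by
    intro y x
    simp [eval_hermiteForm]
  simp_rw [hseries, ← eval_mul]
  rw [← gaussianPiExpectation_apply, Finset.sum_mul_sum, map_sum]
  refine Finset.sum_congr rfl fun i hi => ?_
  simp only [smul_mul_smul_comm, map_sum, map_smul, smul_eq_mul,
    gaussianPiExpectation_hermiteForm_mul hu hw, mul_ite, mul_zero]
  rw [Finset.sum_ite_eq s i, if_pos hi]
  ring

end

lemma integral_stdGaussian_eq {E : Type*} [NormedAddCommGroup E] [NormedSpace ℝ E] (d : ℕ)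
    (f : EuclideanSpace ℝ (Fin d) → E) :
    ∫ x, f x ∂stdGaussian d = ∫ x, f (WithLp.toLp 2 x) ∂gaussianPi (Fin d) 1 :=
  (MeasurableEquiv.toLp 2 (Fin d → ℝ)).measurableEmbedding.integral_map f

lemma EuclideanSpace.real_inner_eq_sum {ι : Type*} [Fintype ι] (u v : EuclideanSpace ℝ ι) :
    ⟪u, v⟫ = ∑ k, u k * v k := by
  simp [PiLp.inner_apply, mul_comm]

lemma EuclideanSpace.sum_sq_eq_one_of_norm_eq_one {ι : Type*} [Fintype ι]
    {u : EuclideanSpace ℝ ι} (hu : ‖u‖ = 1) : ∑ k, u k ^ 2 = 1 := by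
  simpa [hu] using (EuclideanSpace.real_norm_sq_eq u).symm

theorem stmt3 {d n : ℕ} (c : ℕ → ℝ) (hc : ∀ i, 0 ≤ c i)
    (σ : ℝ → ℝ)
    (hσ : ∀ z, σ z = ∑ i ∈ range (n + 1),
      Real.sqrt (c i) * He i z / Real.sqrt (Nat.factorial i)) :
    ∀ u v : EuclideanSpace ℝ (Fin d), ‖u‖ = 1 → ‖v‖ = 1 →
      ∫ x, σ ⟪u, x⟫ * σ ⟪v, x⟫ ∂(stdGaussian d)
        = ∑ i ∈ range (n + 1), c i * ⟪u, v⟫ ^ i := by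
  intro u v hu hv
  have hσ' : ∀ z, σ z = ∑ i ∈ range (n + 1), (√(c i) / √(i ! : ℝ)) * He i z := by
    intro z
    rw [hσ]
    exact Finset.sum_congr rfl fun i _ => by ring
  simp only [integral_stdGaussian_eq, EuclideanSpace.real_inner_eq_sum, hσ']
  rw [integral_hermite_sum_mul_gaussianPi (EuclideanSpace.sum_sq_eq_one_of_norm_eq_one hu)
    (EuclideanSpace.sum_sq_eq_one_of_norm_eq_one hv)]
  refine Finset.sum_congr rfl fun i _ => ?_
  have hfact : (0 : ℝ) < i ! := by exact_mod_cast i.factorial_pos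
  rw [div_pow, Real.sq_sqrt (hc i), Real.sq_sqrt hfact.le, div_mul_cancel₀ _ hfact.ne']
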